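/- arXiv:2411.08536 — 3 statements merged into one kernel-verified Lean document; each statement's English description precedes it below -/
import Mathlib

section
/- If [s⃗] and [t⃗] are leading positive basis elements of ℋ_ℤ (i.e., their first entries are positive), then the extended shuffle product [s⃗] ⧢ [t⃗] is a ℚ-linear combination of leading positive basis elements. -/
/-!
Induction on `s₁ + t₁`, using only the case `s₁, t₁ > 0` of the recursion: it writes the product
as `I` applied to two products whose first entries have a smaller sum. A product whose first entry
has dropped to `0` is, by the zero cases, of the form `[0, …]`, which `I` sends to `[1, …]`; and `I`
preserves leading positivity.
-/

noncomputable section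

/-- The vector space ℋ_ℤ with basis the symbols `[s₁,…,s_k]` (lists of integers),
the empty list being the unit `1`. -/
abbrev HZ : Type := List ℤ →₀ ℚ

/-- The basis symbol `[s₁,…,s_k]`. -/
def bs (l : List ℤ) : HZ := Finsupp.single l 1

/-- Linear extension of a map defined on basis symbols. -/
def hlift (f : List ℤ → HZ) : HZ →ₗ[ℚ] HZ := Finsupp.lift HZ ℚ (List ℤ) f

/-- Prepending a `0` entry to every basis symbol. -/
def preZ : HZ →ₗ[ℚ] HZ := hlift fun l => bs (0 :: l)

/-- The operator `I` adding 1 to the first entry. -/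
def Imap : HZ →ₗ[ℚ] HZ := hlift fun l =>
  match l with
  | [] => 0
  | s :: r => bs ((s + 1) :: r)

/-- The operator `J` subtracting 1 from the first entry, with `J(1) = 0`. -/
def Jmap : HZ →ₗ[ℚ] HZ := hlift fun l =>
  match l with
  | [] => 0
  | s :: r => bs ((s - 1) :: r)

/-- The five-case recursion defining the extended shuffle product on ℋ_ℤ. -/
def IsExtShuffle (m : HZ →ₗ[ℚ] HZ →ₗ[ℚ] HZ) : Prop :=
  (∀ x, m (bs []) x = x) ∧
  (∀ x, m x (bs []) = x) ∧
  (∀ (s' : List ℤ) (t₁ : ℤ) (t' : List ℤ),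
    m (bs (0 :: s')) (bs (t₁ :: t')) = preZ (m (bs s') (bs (t₁ :: t')))) ∧
  (∀ (s₁ : ℤ), 0 < s₁ → ∀ (s' t' : List ℤ),
    m (bs (s₁ :: s')) (bs (0 :: t')) = preZ (m (bs (s₁ :: s')) (bs t'))) ∧
  (∀ (s₁ t₁ : ℤ), 0 < s₁ → 0 < t₁ → ∀ (s' t' : List ℤ),
    m (bs (s₁ :: s')) (bs (t₁ :: t')) =
      Imap (m (bs (s₁ :: s')) (bs ((t₁ - 1) :: t'))) +
      Imap (m (bs ((s₁ - 1) :: s')) (bs (t₁ :: t')))) ∧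
  (∀ (s₁ t₁ : ℤ), 0 < s₁ → t₁ < 0 → ∀ (s' t' : List ℤ),
    m (bs (s₁ :: s')) (bs (t₁ :: t')) =
      Jmap (m (bs (s₁ :: s')) (bs ((t₁ + 1) :: t'))) -
      m (bs ((s₁ - 1) :: s')) (bs ((t₁ + 1) :: t'))) ∧
  (∀ (s₁ : ℤ), s₁ < 0 → ∀ (t₁ : ℤ) (s' t' : List ℤ),
    m (bs (s₁ :: s')) (bs (t₁ :: t')) =
      Jmap (m (bs ((s₁ + 1) :: s')) (bs (t₁ :: t'))) -
      m (bs ((s₁ + 1) :: s')) (bs ((t₁ - 1) :: t')))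

def leadingPositive : Submodule ℚ HZ :=
  Submodule.span ℚ {x : HZ | ∃ a : ℤ, 0 < a ∧ ∃ r : List ℤ, x = bs (a :: r)}

lemma hlift_mem {p : Submodule ℚ HZ} {f : List ℤ → HZ} (hf : ∀ l, f l ∈ p) (x : HZ) :
    hlift f x ∈ p := by
  rw [hlift, Finsupp.lift_apply]
  exact Submodule.sum_mem _ fun l _ => Submodule.smul_mem _ _ (hf l)

lemma hlift_bs (f : List ℤ → HZ) (l : List ℤ) : hlift f (bs l) = f l := by
  simp [hlift, bs]

lemma Imap_bs (a : ℤ) (r : List ℤ) : Imap (bs (a :: r)) = bs ((a + 1) :: r) :=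
  hlift_bs _ _

lemma bs_mem_leadingPositive {a : ℤ} (ha : 0 < a) (r : List ℤ) :
    bs (a :: r) ∈ leadingPositive :=
  Submodule.subset_span ⟨a, ha, r, rfl⟩

lemma Imap_mem_leadingPositive {x : HZ} (hx : x ∈ leadingPositive) :
    Imap x ∈ leadingPositive := by
  refine (Submodule.map_span_le Imap _ _).mpr ?_ (Submodule.mem_map_of_mem hx)
  rintro _ ⟨a, ha, r, rfl⟩
  rw [Imap_bs]
  exact bs_mem_leadingPositive (by omega) r

lemma Imap_preZ_mem_leadingPositive (x : HZ) : Imap (preZ x) ∈ leadingPositive := by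
  refine hlift_mem (p := leadingPositive.comap Imap) (fun l => ?_) x
  rw [Submodule.mem_comap, Imap_bs]
  exact bs_mem_leadingPositive one_pos l

lemma IsExtShuffle.mul_mem_leadingPositive {m : HZ →ₗ[ℚ] HZ →ₗ[ℚ] HZ} (hm : IsExtShuffle m)
    {s₁ t₁ : ℤ} (hs : 0 < s₁) (ht : 0 < t₁) (s' t' : List ℤ) :
    m (bs (s₁ :: s')) (bs (t₁ :: t')) ∈ leadingPositive := by
  obtain ⟨-, -, zero_left, zero_right, pos_pos, -, -⟩ := id hm
  rw [pos_pos s₁ t₁ hs ht s' t']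
  refine add_mem ?_ ?_
  · obtain rfl | ht₁ : t₁ = 1 ∨ 1 < t₁ := by omega
    · rw [sub_self, zero_right s₁ hs]
      exact Imap_preZ_mem_leadingPositive _
    · exact Imap_mem_leadingPositive (hm.mul_mem_leadingPositive hs (by omega) s' t')
  · obtain rfl | hs₁ : s₁ = 1 ∨ 1 < s₁ := by omega
    · rw [sub_self, zero_left]
      exact Imap_preZ_mem_leadingPositive _
    · exact Imap_mem_leadingPositive (hm.mul_mem_leadingPositive (by omega) ht s' t')
termination_by (s₁ + t₁).toNat

/-- The product of two leading positive basis elements is a linear combination of leading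
positive basis elements. -/
theorem leadingPositive_mul (m : HZ →ₗ[ℚ] HZ →ₗ[ℚ] HZ) (hm : IsExtShuffle m)
    (s₁ t₁ : ℤ) (hs : 0 < s₁) (ht : 0 < t₁) (s' t' : List ℤ) :
    m (bs (s₁ :: s')) (bs (t₁ :: t')) ∈
      Submodule.span ℚ {x : HZ | ∃ a : ℤ, 0 < a ∧ ∃ r : List ℤ, x = bs (a :: r)} :=
  hm.mul_mem_leadingPositive hs ht s' t'
end
end

section
/- The operator J on ℋ_ℤ defined by J([s₁,s₂,…,s_k]) = [s₁−1,s₂,…,s_k] and J(1) = 0 is a derivation with respect to the extended shuffle product: J(a ⧢ b) = J(a) ⧢ b + a ⧢ J(b) for all a, b ∈ ℋ_ℤ. -/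
noncomputable section

lemma Jmap_bs_nil : Jmap (bs []) = 0 := hlift_bs _ _

lemma Jmap_bs_cons (s : ℤ) (r : List ℤ) : Jmap (bs (s :: r)) = bs ((s - 1) :: r) :=
  hlift_bs _ _

lemma Imap_bs_nil : Imap (bs []) = 0 := hlift_bs _ _

lemma Imap_bs_cons (s : ℤ) (r : List ℤ) : Imap (bs (s :: r)) = bs ((s + 1) :: r) :=
  hlift_bs _ _

namespace HZ

lemma hom_ext {M : Type*} [AddCommMonoid M] [Module ℚ M] {φ ψ : HZ →ₗ[ℚ] M}
    (h : ∀ l, φ (bs l) = ψ (bs l)) : φ = ψ :=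
  Finsupp.lhom_ext' fun l => LinearMap.ext_ring (h l)

lemma hom_ext₂ {M : Type*} [AddCommMonoid M] [Module ℚ M] {φ ψ : HZ →ₗ[ℚ] HZ →ₗ[ℚ] M}
    (h : ∀ s t, φ (bs s) (bs t) = ψ (bs s) (bs t)) : φ = ψ :=
  hom_ext fun s => hom_ext fun t => h s t

end HZ

lemma hlift_apply_nil (f : List ℤ → HZ) (hf : ∀ l, f l [] = 0) (x : HZ) :
    hlift f x [] = 0 := by
  have h : Finsupp.lapply [] ∘ₗ hlift f = 0 :=
    HZ.hom_ext fun l => by simpa [hlift_bs] using hf l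
  exact LinearMap.congr_fun h x

lemma Imap_apply_nil (x : HZ) : Imap x [] = 0 :=
  hlift_apply_nil _ (fun l => by cases l <;> simp [bs]) x

lemma Jmap_apply_nil (x : HZ) : Jmap x [] = 0 :=
  hlift_apply_nil _ (fun l => by cases l <;> simp [bs]) x

lemma preZ_apply_nil (x : HZ) : preZ x [] = 0 :=
  hlift_apply_nil _ (fun l => by simp [bs]) x

lemma Jmap_comp_Imap :
    Jmap ∘ₗ Imap = LinearMap.id - Finsupp.lsingle [] ∘ₗ Finsupp.lapply [] :=
  HZ.hom_ext fun l => by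
    cases l <;> simp [Imap_bs_nil, Imap_bs_cons, Jmap_bs_cons] <;> simp [bs]

lemma Jmap_Imap_of_apply_nil {x : HZ} (hx : x [] = 0) : Jmap (Imap x) = x := by
  simpa [hx] using LinearMap.congr_fun Jmap_comp_Imap x

section

variable {m : HZ →ₗ[ℚ] HZ →ₗ[ℚ] HZ}

theorem IsExtShuffle.apply_cons_cons_apply_nil (hm : IsExtShuffle m)
    (s₁ t₁ : ℤ) (s' t' : List ℤ) :
    m (bs (s₁ :: s')) (bs (t₁ :: t')) [] = 0 := by
  have ⟨_, _, hzero, hposzero, hpos, hposneg, hneg⟩ := hm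
  rcases lt_trichotomy s₁ 0 with hs | rfl | hs
  · rw [hneg s₁ hs, Finsupp.sub_apply, Jmap_apply_nil,
      hm.apply_cons_cons_apply_nil (s₁ + 1) (t₁ - 1), sub_zero]
  · rw [hzero, preZ_apply_nil]
  rcases lt_trichotomy t₁ 0 with ht | rfl | ht
  · rw [hposneg s₁ t₁ hs ht, Finsupp.sub_apply, Jmap_apply_nil,
      hm.apply_cons_cons_apply_nil (s₁ - 1) (t₁ + 1), sub_zero]
  · rw [hposzero s₁ hs, preZ_apply_nil]
  · rw [hpos s₁ t₁ hs ht, Finsupp.add_apply, Imap_apply_nil, Imap_apply_nil, add_zero]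
-- the rule for `s₁ < 0` may make `t₁` more negative, hence the weight `2` on `s₁`
termination_by 2 * (-s₁).toNat + (-t₁).toNat
decreasing_by all_goals omega

theorem IsExtShuffle.Jmap_apply_bs (hm : IsExtShuffle m) (s t : List ℤ) :
    Jmap (m (bs s) (bs t)) = m (Jmap (bs s)) (bs t) + m (bs s) (Jmap (bs t)) := by
  have ⟨hnil_left, hnil_right, _, _, hpos, hposneg, hneg⟩ := hm
  rcases s with _ | ⟨s₁, s'⟩
  · simp [hnil_left, Jmap_bs_nil]
  rcases t with _ | ⟨t₁, t'⟩
  · simp [hnil_right, Jmap_bs_nil]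
  rw [Jmap_bs_cons, Jmap_bs_cons]
  rcases le_or_gt s₁ 0 with hs | hs
  · rw [hneg (s₁ - 1) (by omega), sub_add_cancel]
    abel
  rcases le_or_gt t₁ 0 with ht | ht
  · rw [hposneg s₁ (t₁ - 1) hs (by omega), sub_add_cancel]
    abel
  rw [hpos s₁ t₁ hs ht, map_add,
    Jmap_Imap_of_apply_nil (hm.apply_cons_cons_apply_nil _ _ _ _),
    Jmap_Imap_of_apply_nil (hm.apply_cons_cons_apply_nil _ _ _ _), add_comm]

end

/-- `J` is a derivation for the extended shuffle product. -/
theorem Jmap_derivation (m : HZ →ₗ[ℚ] HZ →ₗ[ℚ] HZ) (hm : IsExtShuffle m) :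
    ∀ a b : HZ, Jmap (m a b) = m (Jmap a) b + m a (Jmap b) := by
  have h : m.compr₂ Jmap = m ∘ₗ Jmap + m.compl₂ Jmap :=
    HZ.hom_ext₂ fun s t => by simpa using hm.Jmap_apply_bs s t
  intro a b
  simpa using LinearMap.congr_fun₂ h a b
end
end

section
/- For Chen symbols [s⃗; u⃗] and [t⃗; v⃗] whose bottom-row index sets are disjoint, the evaluation map F sending a Chen symbol to its generalized Chen fraction is multiplicative: F([s⃗;u⃗] ⧢ [t⃗;v⃗]) = F([s⃗;u⃗]) · F([t⃗;v⃗]) as rational functions. -/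
noncomputable section

/-- The space with basis the two-row symbols: lists of columns `(sᵢ, uᵢ)` with `sᵢ ∈ ℤ` and
`uᵢ ∈ ℤ≥1`. -/
abbrev H2 : Type := List (ℤ × ℕ+) →₀ ℚ

/-- The basis two-row symbol. -/
def bs2 (l : List (ℤ × ℕ+)) : H2 := Finsupp.single l 1

/-- Linear extension of a map defined on two-row basis symbols. -/
def hlift2 (f : List (ℤ × ℕ+) → H2) : H2 →ₗ[ℚ] H2 := Finsupp.lift H2 ℚ (List (ℤ × ℕ+)) f

/-- Prepending a column to every basis symbol. -/
def pre2 (c : ℤ × ℕ+) : H2 →ₗ[ℚ] H2 := hlift2 fun l => bs2 (c :: l)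

/-- The operator `I^S` adding 1 to the first top-row entry. -/
def I2 : H2 →ₗ[ℚ] H2 := hlift2 fun l =>
  match l with
  | [] => 0
  | (s, u) :: r => bs2 ((s + 1, u) :: r)

/-- The operator `J^S` subtracting 1 from the first top-row entry, with `J^S(1) = 0`. -/
def J2 : H2 →ₗ[ℚ] H2 := hlift2 fun l =>
  match l with
  | [] => 0
  | (s, u) :: r => bs2 ((s - 1, u) :: r)

/-- The five-case recursion defining the extended shuffle product on two-row symbols. -/
def IsExtShuffle2 (m : H2 →ₗ[ℚ] H2 →ₗ[ℚ] H2) : Prop :=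
  (∀ x, m (bs2 []) x = x) ∧
  (∀ x, m x (bs2 []) = x) ∧
  (∀ (u₁ : ℕ+) (p' : List (ℤ × ℕ+)) (t₁ : ℤ) (v₁ : ℕ+) (q' : List (ℤ × ℕ+)),
    m (bs2 ((0, u₁) :: p')) (bs2 ((t₁, v₁) :: q')) =
      pre2 (0, u₁) (m (bs2 p') (bs2 ((t₁, v₁) :: q')))) ∧
  (∀ (s₁ : ℤ), 0 < s₁ → ∀ (u₁ v₁ : ℕ+) (p' q' : List (ℤ × ℕ+)),
    m (bs2 ((s₁, u₁) :: p')) (bs2 ((0, v₁) :: q')) =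
      pre2 (0, v₁) (m (bs2 ((s₁, u₁) :: p')) (bs2 q'))) ∧
  (∀ (s₁ t₁ : ℤ), 0 < s₁ → 0 < t₁ → ∀ (u₁ v₁ : ℕ+) (p' q' : List (ℤ × ℕ+)),
    m (bs2 ((s₁, u₁) :: p')) (bs2 ((t₁, v₁) :: q')) =
      I2 (m (bs2 ((s₁, u₁) :: p')) (bs2 ((t₁ - 1, v₁) :: q'))) +
      I2 (m (bs2 ((s₁ - 1, u₁) :: p')) (bs2 ((t₁, v₁) :: q')))) ∧
  (∀ (s₁ t₁ : ℤ), 0 < s₁ → t₁ < 0 → ∀ (u₁ v₁ : ℕ+) (p' q' : List (ℤ × ℕ+)),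
    m (bs2 ((s₁, u₁) :: p')) (bs2 ((t₁, v₁) :: q')) =
      J2 (m (bs2 ((s₁, u₁) :: p')) (bs2 ((t₁ + 1, v₁) :: q'))) -
      m (bs2 ((s₁ - 1, u₁) :: p')) (bs2 ((t₁ + 1, v₁) :: q'))) ∧
  (∀ (s₁ : ℤ), s₁ < 0 → ∀ (t₁ : ℤ) (u₁ v₁ : ℕ+) (p' q' : List (ℤ × ℕ+)),
    m (bs2 ((s₁, u₁) :: p')) (bs2 ((t₁, v₁) :: q')) =
      J2 (m (bs2 ((s₁ + 1, u₁) :: p')) (bs2 ((t₁, v₁) :: q'))) -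
      m (bs2 ((s₁ + 1, u₁) :: p')) (bs2 ((t₁ - 1, v₁) :: q')))

/-- The generalized Chen fraction attached to a Chen symbol, as a function of the variables
`x : ℕ+ → ℝ`. -/
def chenFrac2 (x : ℕ+ → ℝ) : List (ℤ × ℕ+) → ℝ
  | [] => 1
  | (e, i) :: L => ((x i + (L.map fun c => x c.2).sum) ^ e)⁻¹ * chenFrac2 x L

/-- Linear evaluation of elements of `H2` as Chen fractions. -/
def evF (x : ℕ+ → ℝ) : H2 →ₗ[ℚ] ℝ := Finsupp.lift ℝ ℚ (List (ℤ × ℕ+)) (chenFrac2 x)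

/-!
Every symbol occurring in `[s⃗; u⃗] ⧢ [t⃗; v⃗]` has as bottom row a rearrangement of `u⃗ v⃗`, so on
the product `I^S` and `J^S` become, after evaluation, division and multiplication by the total
sum `A + B` of the variables (`A` over `u⃗`, `B` over `v⃗`). Each rule of the recursion then
reduces to the partial-fraction identity
`(A + B) / (A^s B^t) = 1 / (A^s B^(t-1)) + 1 / (A^(s-1) B^t)`, and the theorem follows by
induction along the recursion. Disjointness makes every denominator a sum of distinct variables,
hence nonzero.
-/

open scoped List

lemma hlift2_bs2 (f : List (ℤ × ℕ+) → H2) (l : List (ℤ × ℕ+)) : hlift2 f (bs2 l) = f l := by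
  simp [hlift2, bs2]

lemma evF_bs2 (x : ℕ+ → ℝ) (l : List (ℤ × ℕ+)) : evF x (bs2 l) = chenFrac2 x l := by
  simp [evF, bs2]

lemma pre2_bs2 (c : ℤ × ℕ+) (l : List (ℤ × ℕ+)) : pre2 c (bs2 l) = bs2 (c :: l) :=
  hlift2_bs2 _ _

lemma I2_bs2_nil : I2 (bs2 []) = 0 := hlift2_bs2 _ _

lemma I2_bs2_cons (s : ℤ) (u : ℕ+) (r : List (ℤ × ℕ+)) :
    I2 (bs2 ((s, u) :: r)) = bs2 ((s + 1, u) :: r) :=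
  hlift2_bs2 _ _

lemma J2_bs2_nil : J2 (bs2 []) = 0 := hlift2_bs2 _ _

lemma J2_bs2_cons (s : ℤ) (u : ℕ+) (r : List (ℤ × ℕ+)) :
    J2 (bs2 ((s, u) :: r)) = bs2 ((s - 1, u) :: r) :=
  hlift2_bs2 _ _

lemma evF_pre2_zero (x : ℕ+ → ℝ) (u : ℕ+) (z : H2) : evF x (pre2 (0, u) z) = evF x z := by
  suffices h : (evF x).comp (pre2 (0, u)) = evF x from LinearMap.congr_fun h z
  refine Finsupp.lhom_ext fun l c => ?_
  simp [pre2, hlift2, evF, bs2, chenFrac2]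

namespace ChenSymbol

def weight (x : ℕ+ → ℝ) (l : List (ℤ × ℕ+)) : ℝ := ((l.map Prod.snd).map x).sum

lemma weight_cons (x : ℕ+ → ℝ) (s : ℤ) (u : ℕ+) (l : List (ℤ × ℕ+)) :
    weight x ((s, u) :: l) = x u + weight x l := rfl

lemma chenFrac2_cons (x : ℕ+ → ℝ) (s : ℤ) (u : ℕ+) (l : List (ℤ × ℕ+)) :
    chenFrac2 x ((s, u) :: l) = ((x u + weight x l) ^ s)⁻¹ * chenFrac2 x l := by
  rw [chenFrac2, weight, List.map_map]
  rfl

lemma chenFrac2_cons_mul_cons (x : ℕ+ → ℝ) (s t : ℤ) (u v : ℕ+) (p q : List (ℤ × ℕ+)) :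
    chenFrac2 x ((s, u) :: p) * chenFrac2 x ((t, v) :: q) =
      ((x u + weight x p) ^ s)⁻¹ * ((x v + weight x q) ^ t)⁻¹ *
        (chenFrac2 x p * chenFrac2 x q) := by
  rw [chenFrac2_cons, chenFrac2_cons]
  ring

lemma weight_perm {x : ℕ+ → ℝ} {l : List (ℤ × ℕ+)} {L : List ℕ+} (h : l.map Prod.snd ~ L) :
    weight x l = (L.map x).sum :=
  (h.map x).sum_eq

lemma sum_map_append_bottom (x : ℕ+ → ℝ) (p q : List (ℤ × ℕ+)) :
    ((p.map Prod.snd ++ q.map Prod.snd).map x).sum = weight x p + weight x q := by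
  rw [List.map_append, List.sum_append, weight, weight]

lemma add_mul_inv_zpow_mul_inv_zpow {K : Type*} [Field K] {A B : K} (hA : A ≠ 0) (hB : B ≠ 0)
    (s t : ℤ) :
    (A + B) * ((A ^ s)⁻¹ * (B ^ t)⁻¹) =
      (A ^ s)⁻¹ * (B ^ (t - 1))⁻¹ + (A ^ (s - 1))⁻¹ * (B ^ t)⁻¹ := by
  rw [zpow_sub_one₀ hA, zpow_sub_one₀ hB, mul_inv, mul_inv, inv_inv, inv_inv]
  ring

theorem shuffle_induction {P : List (ℤ × ℕ+) → List (ℤ × ℕ+) → Prop}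
    (nil_left : ∀ q, P [] q) (nil_right : ∀ c p', P (c :: p') [])
    (zero_left : ∀ u p' t v q', P p' ((t, v) :: q') → P ((0, u) :: p') ((t, v) :: q'))
    (zero_right : ∀ s, 0 < s → ∀ u v p' q',
      P ((s, u) :: p') q' → P ((s, u) :: p') ((0, v) :: q'))
    (pos_pos : ∀ s t, 0 < s → 0 < t → ∀ u v p' q',
      P ((s, u) :: p') ((t - 1, v) :: q') → P ((s - 1, u) :: p') ((t, v) :: q') →
        P ((s, u) :: p') ((t, v) :: q'))
    (pos_neg : ∀ s t, 0 < s → t < 0 → ∀ u v p' q',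
      P ((s, u) :: p') ((t + 1, v) :: q') → P ((s - 1, u) :: p') ((t + 1, v) :: q') →
        P ((s, u) :: p') ((t, v) :: q'))
    (neg : ∀ s, s < 0 → ∀ t u v p' q',
      P ((s + 1, u) :: p') ((t, v) :: q') → P ((s + 1, u) :: p') ((t - 1, v) :: q') →
        P ((s, u) :: p') ((t, v) :: q')) :
    ∀ p q, P p q :=
  go
where
  go : ∀ p q, P p q
  | [], q => nil_left q
  | c :: p', [] => nil_right c p'
  | (s, u) :: p', (t, v) :: q' => by
    rcases lt_trichotomy s 0 with hs | rfl | hs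
    · exact neg s hs t u v p' q' (go _ _) (go _ _)
    · exact zero_left u p' t v q' (go _ _)
    rcases lt_trichotomy t 0 with ht | rfl | ht
    · exact pos_neg s t hs ht u v p' q' (go _ _) (go _ _)
    · exact zero_right s hs u v p' q' (go _ _)
    · exact pos_pos s t hs ht u v p' q' (go _ _) (go _ _)
  termination_by p q => (p.length + q.length, (p.headD (0, 1)).1.natAbs, (q.headD (0, 1)).1.natAbs)

def bottomPermSpan (L : List ℕ+) : Submodule ℚ H2 :=
  Finsupp.supported ℚ ℚ {l | l.map Prod.snd ~ L}

variable {L : List ℕ+}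

lemma bs2_mem_bottomPermSpan {l : List (ℤ × ℕ+)} (h : l.map Prod.snd ~ L) :
    bs2 l ∈ bottomPermSpan L :=
  Finsupp.single_mem_supported ℚ 1 h

lemma bottomPermSpan_congr {L' : List ℕ+} (h : L ~ L') :
    bottomPermSpan L = bottomPermSpan L' := by
  unfold bottomPermSpan
  congr 1
  ext l
  exact ⟨fun h' => h'.trans h, fun h' => h'.trans h.symm⟩

lemma bottomPermSpan_le_comap {L' : List ℕ+} {φ : H2 →ₗ[ℚ] H2}
    (h : ∀ l : List (ℤ × ℕ+), l.map Prod.snd ~ L → φ (bs2 l) ∈ bottomPermSpan L') :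
    bottomPermSpan L ≤ (bottomPermSpan L').comap φ := by
  rw [bottomPermSpan, Finsupp.supported_eq_span_single, Submodule.span_le]
  rintro _ ⟨l, hl, rfl⟩
  exact h l hl

lemma eqOn_bottomPermSpan {f g : H2 →ₗ[ℚ] ℝ}
    (h : ∀ l : List (ℤ × ℕ+), l.map Prod.snd ~ L → f (bs2 l) = g (bs2 l)) :
    Set.EqOn f g (bottomPermSpan L) := by
  rw [bottomPermSpan, Finsupp.supported_eq_span_single]
  refine LinearMap.eqOn_span' ?_
  rintro _ ⟨l, hl, rfl⟩
  exact h l hl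

lemma pre2_mem_bottomPermSpan (c : ℤ × ℕ+) {z : H2} (hz : z ∈ bottomPermSpan L) :
    pre2 c z ∈ bottomPermSpan (c.2 :: L) :=
  bottomPermSpan_le_comap (fun l hl => by
    rw [pre2_bs2]; exact bs2_mem_bottomPermSpan (hl.cons c.2)) hz

lemma I2_mem_bottomPermSpan {z : H2} (hz : z ∈ bottomPermSpan L) : I2 z ∈ bottomPermSpan L :=
  bottomPermSpan_le_comap (fun l hl => by
    rcases l with _ | ⟨⟨s, u⟩, r⟩
    · rw [I2_bs2_nil]; exact zero_mem _
    · rw [I2_bs2_cons]; exact bs2_mem_bottomPermSpan hl) hz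

lemma J2_mem_bottomPermSpan {z : H2} (hz : z ∈ bottomPermSpan L) : J2 z ∈ bottomPermSpan L :=
  bottomPermSpan_le_comap (fun l hl => by
    rcases l with _ | ⟨⟨s, u⟩, r⟩
    · rw [J2_bs2_nil]; exact zero_mem _
    · rw [J2_bs2_cons]; exact bs2_mem_bottomPermSpan hl) hz

variable {x : ℕ+ → ℝ}

lemma evF_I2_of_mem_bottomPermSpan (hL : (L.map x).sum ≠ 0) {z : H2}
    (hz : z ∈ bottomPermSpan L) : evF x (I2 z) = ((L.map x).sum)⁻¹ * evF x z := by
  refine eqOn_bottomPermSpan (f := (evF x).comp I2) (g := ((L.map x).sum)⁻¹ • evF x)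
    (fun l hl => ?_) hz
  rcases l with _ | ⟨⟨s, u⟩, r⟩
  · simp_all
  · rw [← weight_perm hl, weight_cons] at hL ⊢
    simp only [LinearMap.comp_apply, LinearMap.smul_apply, I2_bs2_cons, evF_bs2, chenFrac2_cons,
      zpow_add_one₀ hL, mul_inv, smul_eq_mul]
    ring

lemma evF_J2_of_mem_bottomPermSpan (hL : (L.map x).sum ≠ 0) {z : H2}
    (hz : z ∈ bottomPermSpan L) : evF x (J2 z) = (L.map x).sum * evF x z := by
  refine eqOn_bottomPermSpan (f := (evF x).comp J2) (g := (L.map x).sum • evF x)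
    (fun l hl => ?_) hz
  rcases l with _ | ⟨⟨s, u⟩, r⟩
  · simp_all
  · rw [← weight_perm hl, weight_cons] at hL ⊢
    simp only [LinearMap.comp_apply, LinearMap.smul_apply, J2_bs2_cons, evF_bs2, chenFrac2_cons,
      zpow_sub_one₀ hL, mul_inv, inv_inv, smul_eq_mul]
    ring

/-- Every denominator met by the recursion is the sum of `x` over a sublist of the joint bottom
row. -/
def SublistSumsNeZero (x : ℕ+ → ℝ) (L : List ℕ+) : Prop :=
  ∀ L' : List ℕ+, L' <+ L → L' ≠ [] → (L'.map x).sum ≠ 0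

lemma SublistSumsNeZero.sublist {L' : List ℕ+} (h : SublistSumsNeZero x L) (hL : L' <+ L) :
    SublistSumsNeZero x L' :=
  fun L'' hL'' => h L'' (hL''.trans hL)

lemma sublistSumsNeZero_of_nodup (hL : L.Nodup)
    (hx : ∀ T : Finset ℕ+, T.Nonempty → T ⊆ L.toFinset → ∑ i ∈ T, x i ≠ 0) :
    SublistSumsNeZero x L := by
  intro L' hL' hne
  rw [← List.sum_toFinset x (hL.sublist hL')]
  exact hx _ (List.toFinset_nonempty_iff _ |>.mpr hne)
    fun i hi => List.mem_toFinset.mpr (hL'.subset (List.mem_toFinset.mp hi))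

lemma SublistSumsNeZero.weight_ne_zero {p q : List (ℤ × ℕ+)}
    (h : SublistSumsNeZero x (p.map Prod.snd ++ q.map Prod.snd)) (hp : p ≠ []) (hq : q ≠ []) :
    weight x p ≠ 0 ∧ weight x q ≠ 0 ∧ ((p.map Prod.snd ++ q.map Prod.snd).map x).sum ≠ 0 :=
  ⟨h _ (List.sublist_append_left _ _) (by simpa using hp),
    h _ (List.sublist_append_right _ _) (by simpa using hq),
    h _ (List.Sublist.refl _) (by simp [hp])⟩

end ChenSymbol

open ChenSymbol

namespace IsExtShuffle2

variable {m : H2 →ₗ[ℚ] H2 →ₗ[ℚ] H2}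

theorem mem_bottomPermSpan (hm : IsExtShuffle2 m) :
    ∀ p q : List (ℤ × ℕ+),
      m (bs2 p) (bs2 q) ∈ bottomPermSpan (p.map Prod.snd ++ q.map Prod.snd) := by
  obtain ⟨nil_left, nil_right, zero_left, zero_right, pos_pos, pos_neg, neg⟩ := hm
  refine shuffle_induction ?_ ?_ ?_ ?_ ?_ ?_ ?_
  · intro q
    rw [nil_left]
    exact bs2_mem_bottomPermSpan (List.Perm.refl _)
  · intro c p'
    rw [nil_right]
    exact bs2_mem_bottomPermSpan (by simp)
  · intro u p' t v q' ih
    rw [zero_left]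
    exact pre2_mem_bottomPermSpan _ ih
  · intro s hs u v p' q' ih
    have h := pre2_mem_bottomPermSpan (0, v) ih
    rw [bottomPermSpan_congr List.perm_middle.symm] at h
    rwa [zero_right s hs]
  · intro s t hs ht u v p' q' ih₁ ih₂
    rw [pos_pos s t hs ht]
    exact add_mem (I2_mem_bottomPermSpan ih₁) (I2_mem_bottomPermSpan ih₂)
  · intro s t hs ht u v p' q' ih₁ ih₂
    rw [pos_neg s t hs ht]
    exact sub_mem (J2_mem_bottomPermSpan ih₁) ih₂
  · intro s hs t u v p' q' ih₁ ih₂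
    rw [neg s hs]
    exact sub_mem (J2_mem_bottomPermSpan ih₁) ih₂

theorem evF_eq_mul (hm : IsExtShuffle2 m) (x : ℕ+ → ℝ) :
    ∀ p q : List (ℤ × ℕ+), SublistSumsNeZero x (p.map Prod.snd ++ q.map Prod.snd) →
      evF x (m (bs2 p) (bs2 q)) = chenFrac2 x p * chenFrac2 x q := by
  have hmem := hm.mem_bottomPermSpan
  obtain ⟨nil_left, nil_right, zero_left, zero_right, pos_pos, pos_neg, neg⟩ := hm
  refine shuffle_induction ?_ ?_ ?_ ?_ ?_ ?_ ?_
  · intro q _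
    rw [nil_left, evF_bs2, chenFrac2, one_mul]
  · intro c p' _
    rw [nil_right, evF_bs2, chenFrac2, mul_one]
  · intro u p' t v q' ih h
    rw [zero_left, evF_pre2_zero, ih (h.sublist (List.sublist_cons_self _ _)),
      chenFrac2_cons x 0 u, zpow_zero, inv_one, one_mul]
  · intro s hs u v p' q' ih h
    rw [zero_right s hs, evF_pre2_zero,
      ih (h.sublist ((List.sublist_cons_self _ _).append_left _)), chenFrac2_cons x 0 v,
      zpow_zero, inv_one, one_mul]
  · intro s t hs ht u v p' q' ih₁ ih₂ h
    obtain ⟨hA, hB, hS⟩ := h.weight_ne_zero (List.cons_ne_nil _ _) (List.cons_ne_nil _ _)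
    rw [pos_pos s t hs ht, map_add,
      evF_I2_of_mem_bottomPermSpan hS (hmem ((s, u) :: p') ((t - 1, v) :: q')),
      evF_I2_of_mem_bottomPermSpan hS (hmem ((s - 1, u) :: p') ((t, v) :: q')), ih₁ h, ih₂ h]
    rw [sum_map_append_bottom] at hS ⊢
    simp only [chenFrac2_cons_mul_cons, weight_cons] at hA hB hS ⊢
    rw [← mul_add, ← add_mul, ← add_mul_inv_zpow_mul_inv_zpow hA hB, mul_assoc,
      inv_mul_cancel_left₀ hS]
  · intro s t hs ht u v p' q' ih₁ ih₂ h
    obtain ⟨hA, hB, hS⟩ := h.weight_ne_zero (List.cons_ne_nil _ _) (List.cons_ne_nil _ _)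
    rw [pos_neg s t hs ht, map_sub,
      evF_J2_of_mem_bottomPermSpan hS (hmem ((s, u) :: p') ((t + 1, v) :: q')), ih₁ h, ih₂ h,
      sum_map_append_bottom]
    simp only [chenFrac2_cons_mul_cons, weight_cons] at hA hB ⊢
    rw [← mul_assoc, add_mul_inv_zpow_mul_inv_zpow hA hB, add_sub_cancel_right]
    ring
  · intro s hs t u v p' q' ih₁ ih₂ h
    obtain ⟨hA, hB, hS⟩ := h.weight_ne_zero (List.cons_ne_nil _ _) (List.cons_ne_nil _ _)
    rw [neg s hs, map_sub,
      evF_J2_of_mem_bottomPermSpan hS (hmem ((s + 1, u) :: p') ((t, v) :: q')), ih₁ h, ih₂ h,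
      sum_map_append_bottom]
    simp only [chenFrac2_cons_mul_cons, weight_cons] at hA hB ⊢
    rw [← mul_assoc, add_mul_inv_zpow_mul_inv_zpow hA hB, add_sub_cancel_right]
    ring

end IsExtShuffle2

/-- For Chen symbols with disjoint bottom-row index sets, evaluation as Chen fractions is
multiplicative with respect to the product of symbols (equality of rational functions, stated
on the domain where no relevant denominator vanishes). -/
theorem chen_symbol_eval_multiplicative (m2 : H2 →ₗ[ℚ] H2 →ₗ[ℚ] H2) (hm2 : IsExtShuffle2 m2)
    (p q : List (ℤ × ℕ+)) (hpq : (p.map Prod.snd ++ q.map Prod.snd).Nodup)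
    (x : ℕ+ → ℝ)
    (hx : ∀ T : Finset ℕ+, T.Nonempty → T ⊆ (p.map Prod.snd ++ q.map Prod.snd).toFinset →
      ∑ i ∈ T, x i ≠ 0) :
    evF x (m2 (bs2 p) (bs2 q)) = chenFrac2 x p * chenFrac2 x q :=
  hm2.evF_eq_mul x p q (sublistSumsNeZero_of_nodup hpq hx)
end
end
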